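/- arXiv:2604.15690 — 7 statements merged into one kernel-verified Lean document; each statement's English description precedes it below -/
import Mathlib

section
/- Let m, l be positive integers and let A, B ∈ ℝ^{(m+l)×m}, C ∈ ℝ^{(m+l)×l} be matrices such that the partitioned matrix Q = [A B C] has the mixed P property. Then for every index subset α ⊆ {1,…,m} with complement ᾱ, the matrix [A_α B_ᾱ C] (formed from the columns of A indexed by α, the columns of B indexed by ᾱ, and all columns of C) has linearly independent columns; equivalently, if A r + B s + C t = 0 for vectors r, s ∈ ℝ^m, t ∈ ℝ^l with r_i = 0 for all i ∉ α and s_i = 0 for all i ∈ α, then r = 0, s = 0 and t = 0. -/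
open Matrix

/-- If the partitioned matrix `Q = [A B C]` has the mixed P property
(`C` has linearly independent columns, and `A r + B s + C t = 0` with `(r,s) ≠ 0` forces
`r i * s i > 0` for some `i`), then for every index subset `α ⊆ {1,…,m}` the matrix
`[A_α B_ᾱ C]` has linearly independent columns: if `A r + B s + C t = 0` with `r`
supported on `α` and `s` supported on the complement of `α`, then `r = s = 0` and `t = 0`. -/
theorem mixedP_submatrix_linearIndependent
    (m l : ℕ) (hm : 0 < m) (hl : 0 < l)
    (A B : Matrix (Fin (m + l)) (Fin m) ℝ) (C : Matrix (Fin (m + l)) (Fin l) ℝ)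
    (hC : ∀ t : Fin l → ℝ, C.mulVec t = 0 → t = 0)
    (hP : ∀ (r s : Fin m → ℝ) (t : Fin l → ℝ),
      A.mulVec r + B.mulVec s + C.mulVec t = 0 → (r ≠ 0 ∨ s ≠ 0) →
      ∃ i : Fin m, 0 < r i * s i)
    (α : Set (Fin m)) (r s : Fin m → ℝ) (t : Fin l → ℝ)
    (hr : ∀ i ∉ α, r i = 0) (hs : ∀ i ∈ α, s i = 0)
    (h : A.mulVec r + B.mulVec s + C.mulVec t = 0) :
    r = 0 ∧ s = 0 ∧ t = 0 := by
  have hrs : r = 0 ∧ s = 0 := by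
    by_contra hne
    have hne' : r ≠ 0 ∨ s ≠ 0 := by tauto
    obtain ⟨i, hi⟩ := hP r s t h hne'
    by_cases hiα : i ∈ α
    · rw [hs i hiα, mul_zero] at hi; exact lt_irrefl 0 hi
    · rw [hr i hiα, zero_mul] at hi; exact lt_irrefl 0 hi
  obtain ⟨hr0, hs0⟩ := hrs
  refine ⟨hr0, hs0, hC t ?_⟩
  simpa [hr0, hs0] using h
end

section
/- Let F : ℝ^n × ℝ^m × ℝ^m × ℝ^l → ℝ^{m+l} be differentiable at u = (x,y,w,z), let σ ∈ ℝ, and let d = (dx,dy,dw,dz) be a direction satisfying the linearized Newton equation DF(u)[d] = −F(u) and the perturbed complementarity equations w_j dy_j + y_j dw_j = −w_j y_j + σ (yᵀw)/m for every j = 1,…,m. Then the derivative of φ(x,y,w,z) := ‖F(x,y,w,z)‖² + yᵀw at u in the direction d equals −2‖F(u)‖² − (1−σ) yᵀw. -/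
/-!
Both terms of `φ` are differentiated by the chain rule: `‖F‖²` has derivative `2⟪F u, DF(u)[d]⟫`,
which the Newton equation turns into `-2‖F u‖²`, and `yᵀw` has derivative
`∑ⱼ (wⱼ dyⱼ + yⱼ dwⱼ)`; summing the centering equations over `j`, the `σ`-terms add up to
`σ yᵀw` because there are exactly `m` of them.
-/

open ContinuousLinearMap in
theorem HasFDerivAt.sum_mul_apply {E ι : Type*} [NormedAddCommGroup E] [NormedSpace ℝ E]
    [Fintype ι] {f g : E → ι → ℝ} {f' g' : E →L[ℝ] ι → ℝ} {x : E}
    (hf : HasFDerivAt f f' x) (hg : HasFDerivAt g g' x) :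
    HasFDerivAt (fun v => ∑ i, f v i * g v i)
      (∑ i, (f x i • (proj i).comp g' + g x i • (proj i).comp f')) x :=
  HasFDerivAt.fun_sum fun i _ =>
    (((proj i).hasFDerivAt.comp x hf).mul ((proj i).hasFDerivAt.comp x hg) :)

theorem Finset.sum_eq_neg_mul_sum_of_centering {ι : Type*} [Fintype ι] (a c : ι → ℝ) (σ : ℝ)
    (h : ∀ j, a j = -c j + σ * ((∑ i, c i) / Fintype.card ι)) :
    ∑ j, a j = -(1 - σ) * ∑ i, c i := by
  rw [Finset.sum_congr rfl fun j _ => h j, Finset.sum_add_distrib, Finset.sum_neg_distrib,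
    Finset.sum_const, Finset.card_univ, nsmul_eq_mul]
  rcases isEmpty_or_nonempty ι with _ | _
  · simp
  · have : (Fintype.card ι : ℝ) ≠ 0 := Nat.cast_ne_zero.mpr Fintype.card_ne_zero
    field_simp
    ring

/-- If `F` is differentiable at `u = (x,y,w,z)` with derivative `F'`,
`d = (dx,dy,dw,dz)` satisfies the linearized Newton equation `F'(d) = -F(u)` and the
perturbed complementarity equations `w_j dy_j + y_j dw_j = -w_j y_j + σ (yᵀw)/m` for all
`j`, then the derivative of `φ(x,y,w,z) = ‖F(x,y,w,z)‖² + yᵀw` at `u` in the direction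
`d` equals `-2‖F(u)‖² - (1-σ) yᵀw`. -/
theorem constraintViolation_directionalDerivative
    (n m l : ℕ)
    (F : (Fin n → ℝ) × (Fin m → ℝ) × (Fin m → ℝ) × (Fin l → ℝ) →
      EuclideanSpace ℝ (Fin (m + l)))
    (u : (Fin n → ℝ) × (Fin m → ℝ) × (Fin m → ℝ) × (Fin l → ℝ))
    (F' : ((Fin n → ℝ) × (Fin m → ℝ) × (Fin m → ℝ) × (Fin l → ℝ)) →L[ℝ]
      EuclideanSpace ℝ (Fin (m + l)))
    (hF : HasFDerivAt F F' u)
    (σ : ℝ)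
    (d : (Fin n → ℝ) × (Fin m → ℝ) × (Fin m → ℝ) × (Fin l → ℝ))
    (hNewton : F' d = -F u)
    (hPert : ∀ j : Fin m, u.2.2.1 j * d.2.1 j + u.2.1 j * d.2.2.1 j
      = -(u.2.2.1 j * u.2.1 j) + σ * ((∑ i, u.2.1 i * u.2.2.1 i) / m)) :
    ∃ φ' : ((Fin n → ℝ) × (Fin m → ℝ) × (Fin m → ℝ) × (Fin l → ℝ)) →L[ℝ] ℝ,
      HasFDerivAt (fun v => ‖F v‖ ^ 2 + ∑ i, v.2.1 i * v.2.2.1 i) φ' u ∧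
      φ' d = -2 * ‖F u‖ ^ 2 - (1 - σ) * ∑ i, u.2.1 i * u.2.2.1 i := by
  refine ⟨_, hF.norm_sq.add (hasFDerivAt_snd.fst.sum_mul_apply hasFDerivAt_snd.snd.fst), ?_⟩
  have hResidual : (2 • (innerSL ℝ (F u)).comp F') d = -2 * ‖F u‖ ^ 2 := by
    simp [hNewton]
  have hComplementarity : ∑ j, (u.2.1 j * d.2.2.1 j + u.2.2.1 j * d.2.1 j)
      = -(1 - σ) * ∑ i, u.2.1 i * u.2.2.1 i :=
    Finset.sum_eq_neg_mul_sum_of_centering _ _ σ fun j => by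
      rw [Fintype.card_fin]
      linear_combination hPert j
  simp only [add_apply, sum_apply, smul_apply, smul_eq_mul, ContinuousLinearMap.comp_apply,
    ContinuousLinearMap.coe_fst', ContinuousLinearMap.coe_snd', ContinuousLinearMap.proj_apply,
    hResidual, hComplementarity]
  ring
end

section
/- Let F : ℝ^n × ℝ^m × ℝ^m × ℝ^l → ℝ^{m+l} be differentiable at u = (x,y,w,z), where y ≥ 0 and w ≥ 0 componentwise, let σ ∈ [0,1), and let d = (dx,dy,dw,dz) satisfy DF(u)[d] = −F(u) and w_j dy_j + y_j dw_j = −w_j y_j + σ (yᵀw)/m for every j = 1,…,m. If F(u) ≠ 0 or yᵀw > 0, then the derivative of φ(x,y,w,z) := ‖F(x,y,w,z)‖² + yᵀw at u in the direction d is strictly negative, i.e. d is a descent direction for φ at u. -/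
/-!
Along a Newton direction (`F' d = -F u`) the derivative of `‖F‖²` is
`2 ⟪F u, F' d⟫ = -2 ‖F u‖²`, and summing the perturbed complementarity equations over `j` shows
that the derivative of `yᵀw` is `(σ - 1) yᵀw ≤ 0`. The first term is negative when `F u ≠ 0`,
the second when `yᵀw > 0`.
-/

open ContinuousLinearMap

section
variable {E ι : Type*} [NormedAddCommGroup E] [NormedSpace ℝ E] [Fintype ι]

theorem HasFDerivAt.sum_mul {f g : E → ι → ℝ} {f' g' : E →L[ℝ] ι → ℝ} {u : E}
    (hf : HasFDerivAt f f' u) (hg : HasFDerivAt g g' u) :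
    HasFDerivAt (fun v => ∑ i, f v i * g v i)
      (∑ i, (f u i • (proj i).comp g' + g u i • (proj i).comp f')) u :=
  HasFDerivAt.fun_sum fun i _ => (hasFDerivAt_pi'.1 hf i).mul (hasFDerivAt_pi'.1 hg i)

theorem sum_add_eq_of_perturbed_complementarity {y w dy dw : ι → ℝ} {σ : ℝ}
    (h : ∀ j, w j * dy j + y j * dw j
      = -(w j * y j) + σ * ((∑ i, y i * w i) / Fintype.card ι)) :
    ∑ j, (y j * dw j + w j * dy j) = (σ - 1) * ∑ i, y i * w i := by
  rcases isEmpty_or_nonempty ι with hι | hι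
  · simp
  have hcard : (Fintype.card ι : ℝ) ≠ 0 := Nat.cast_ne_zero.2 Fintype.card_ne_zero
  calc ∑ j, (y j * dw j + w j * dy j)
      = ∑ j, (-(y j * w j) + σ * ((∑ i, y i * w i) / Fintype.card ι)) :=
        Finset.sum_congr rfl fun j _ => by rw [add_comm, h, mul_comm (w j)]
    _ = (σ - 1) * ∑ i, y i * w i := by
        rw [Finset.sum_add_distrib, Finset.sum_neg_distrib, Finset.sum_const, Finset.card_univ,
          nsmul_eq_mul]
        field_simp
        ring

end

theorem two_smul_innerSL_comp_apply_of_apply_eq_neg {E G : Type*} [NormedAddCommGroup E]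
    [NormedSpace ℝ E] [NormedAddCommGroup G] [InnerProductSpace ℝ G] {x : G} {L : E →L[ℝ] G}
    {d : E} (h : L d = -x) : (2 • (innerSL ℝ x).comp L) d = -(2 * ‖x‖ ^ 2) := by
  simp [h]

theorem constraintViolation_descentDirection_general
    (n m l : ℕ)
    (F : (Fin n → ℝ) × (Fin m → ℝ) × (Fin m → ℝ) × (Fin l → ℝ) →
      EuclideanSpace ℝ (Fin (m + l)))
    (u : (Fin n → ℝ) × (Fin m → ℝ) × (Fin m → ℝ) × (Fin l → ℝ))
    (F' : ((Fin n → ℝ) × (Fin m → ℝ) × (Fin m → ℝ) × (Fin l → ℝ)) →L[ℝ]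
      EuclideanSpace ℝ (Fin (m + l)))
    (hF : HasFDerivAt F F' u)
    (hy : ∀ i, 0 ≤ u.2.1 i) (hw : ∀ i, 0 ≤ u.2.2.1 i)
    (σ : ℝ) (hσ1 : σ < 1)
    (d : (Fin n → ℝ) × (Fin m → ℝ) × (Fin m → ℝ) × (Fin l → ℝ))
    (hNewton : F' d = -F u)
    (hPert : ∀ j : Fin m, u.2.2.1 j * d.2.1 j + u.2.1 j * d.2.2.1 j
      = -(u.2.2.1 j * u.2.1 j) + σ * ((∑ i, u.2.1 i * u.2.2.1 i) / m))
    (hne : F u ≠ 0 ∨ 0 < ∑ i, u.2.1 i * u.2.2.1 i) :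
    ∃ φ' : ((Fin n → ℝ) × (Fin m → ℝ) × (Fin m → ℝ) × (Fin l → ℝ)) →L[ℝ] ℝ,
      HasFDerivAt (fun v => ‖F v‖ ^ 2 + ∑ i, v.2.1 i * v.2.2.1 i) φ' u ∧
      φ' d < 0 := by
  have hyw :=
    (hasFDerivAt_snd (𝕜 := ℝ) (p := u)).fst.sum_mul (hasFDerivAt_snd (𝕜 := ℝ) (p := u)).snd.fst
  refine ⟨_, hF.norm_sq.add hyw, ?_⟩
  have hcompl : ∑ j, (u.2.1 j * d.2.2.1 j + u.2.2.1 j * d.2.1 j)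
      = (σ - 1) * ∑ i, u.2.1 i * u.2.2.1 i :=
    sum_add_eq_of_perturbed_complementarity (by simpa only [Fintype.card_fin] using hPert)
  rw [add_apply, two_smul_innerSL_comp_apply_of_apply_eq_neg hNewton]
  simp only [sum_apply, add_apply, smul_apply, comp_apply, proj_apply, coe_fst', coe_snd',
    smul_eq_mul]
  rw [hcompl]
  have hS : 0 ≤ ∑ i, u.2.1 i * u.2.2.1 i :=
    Finset.sum_nonneg fun i _ => mul_nonneg (hy i) (hw i)
  rcases hne with hFu | hS_pos
  · have := norm_pos_iff.2 hFu
    nlinarith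
  · nlinarith

/-- Under the hypotheses of Statement 2, with additionally `y ≥ 0`,
`w ≥ 0` componentwise and `σ ∈ [0,1)`: if `F(u) ≠ 0` or `yᵀw > 0`, then the derivative
of `φ(x,y,w,z) = ‖F(x,y,w,z)‖² + yᵀw` at `u` in the direction `d` is strictly negative,
i.e. `d` is a descent direction for `φ` at `u`. -/
theorem constraintViolation_descentDirection
    (n m l : ℕ)
    (F : (Fin n → ℝ) × (Fin m → ℝ) × (Fin m → ℝ) × (Fin l → ℝ) →
      EuclideanSpace ℝ (Fin (m + l)))
    (u : (Fin n → ℝ) × (Fin m → ℝ) × (Fin m → ℝ) × (Fin l → ℝ))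
    (F' : ((Fin n → ℝ) × (Fin m → ℝ) × (Fin m → ℝ) × (Fin l → ℝ)) →L[ℝ]
      EuclideanSpace ℝ (Fin (m + l)))
    (hF : HasFDerivAt F F' u)
    (hy : ∀ i, 0 ≤ u.2.1 i) (hw : ∀ i, 0 ≤ u.2.2.1 i)
    (σ : ℝ) (hσ0 : 0 ≤ σ) (hσ1 : σ < 1)
    (d : (Fin n → ℝ) × (Fin m → ℝ) × (Fin m → ℝ) × (Fin l → ℝ))
    (hNewton : F' d = -F u)
    (hPert : ∀ j : Fin m, u.2.2.1 j * d.2.1 j + u.2.1 j * d.2.2.1 j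
      = -(u.2.2.1 j * u.2.1 j) + σ * ((∑ i, u.2.1 i * u.2.2.1 i) / m))
    (hne : F u ≠ 0 ∨ 0 < ∑ i, u.2.1 i * u.2.2.1 i) :
    ∃ φ' : ((Fin n → ℝ) × (Fin m → ℝ) × (Fin m → ℝ) × (Fin l → ℝ)) →L[ℝ] ℝ,
      HasFDerivAt (fun v => ‖F v‖ ^ 2 + ∑ i, v.2.1 i * v.2.2.1 i) φ' u ∧
      φ' d < 0 :=
  constraintViolation_descentDirection_general n m l F u F' hF hy hw σ hσ1 d hNewton hPert hne
end

section
/- Let y, w, dy, dw ∈ ℝ^m, let σ ∈ ℝ, set μ := (yᵀw)/m, and suppose the perturbed complementarity equations w_j dy_j + y_j dw_j = −w_j y_j + σ μ hold for every j = 1,…,m. Then for every scalar t ∈ ℝ, (w + t·dw)ᵀ(y + t·dy) = (1 − t)·wᵀy + σ t·wᵀy + t²·(dw)ᵀ(dy). -/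
/-! Expanding the product, the coefficient of `t` is `∑ (w dy + y dw)`; summing the centering
equations turns it into `(σ - 1) wᵀy`, because `m` copies of `μ` add up to `wᵀy`. -/

open Finset

theorem Finset.sum_add_mul_mul_add_mul {ι R : Type*} [CommSemiring R] (s : Finset ι)
    (a b c d : ι → R) (t : R) :
    ∑ j ∈ s, (a j + t * c j) * (b j + t * d j)
      = ∑ j ∈ s, a j * b j + t * ∑ j ∈ s, (a j * d j + b j * c j)
        + t ^ 2 * ∑ j ∈ s, c j * d j := by
  simp only [mul_sum, ← sum_add_distrib]
  exact sum_congr rfl fun j _ => by ring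

theorem Fintype.sum_const_sum_div_card {ι K : Type*} [Fintype ι] [Semifield K] [CharZero K]
    (f : ι → K) : ∑ _j : ι, (∑ i, f i) / Fintype.card ι = ∑ i, f i := by
  rw [← Fintype.expect_eq_sum_div_card, sum_const, card_univ, nsmul_eq_mul,
    Fintype.card_mul_expect]

theorem sum_mul_add_mul_eq_of_centering {ι K : Type*} [Fintype ι] [Field K] [CharZero K]
    (y w dy dw : ι → K) (σ : K)
    (hCenter : ∀ j, w j * dy j + y j * dw j
      = -(w j * y j) + σ * ((∑ i, y i * w i) / Fintype.card ι)) :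
    ∑ j, (w j * dy j + y j * dw j) = (σ - 1) * ∑ j, w j * y j := by
  rw [sum_congr rfl fun j _ => hCenter j, sum_add_distrib, sum_neg_distrib, ← mul_sum,
    Fintype.sum_const_sum_div_card]
  simp only [mul_comm (y _)]
  ring

/-- If the perturbed complementarity equations
`w_j dy_j + y_j dw_j = -w_j y_j + σ μ` hold for all `j`, with `μ = (yᵀw)/m`, then
for every scalar `t`,
`(w + t dw)ᵀ(y + t dy) = (1 - t) wᵀy + σ t wᵀy + t² (dw)ᵀ(dy)`. -/
theorem complementarity_along_arc
    (m : ℕ) (y w dy dw : Fin m → ℝ) (σ : ℝ)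
    (hPert : ∀ j : Fin m, w j * dy j + y j * dw j
      = -(w j * y j) + σ * ((∑ i, y i * w i) / m)) :
    ∀ t : ℝ,
      ∑ j, (w j + t * dw j) * (y j + t * dy j)
        = (1 - t) * (∑ j, w j * y j) + σ * t * (∑ j, w j * y j)
          + t ^ 2 * ∑ j, dw j * dy j := by
  intro t
  have hCross := sum_mul_add_mul_eq_of_centering y w dy dw σ
    (by simpa only [Fintype.card_fin] using hPert)
  rw [sum_add_mul_mul_add_mul, hCross]
  ring
end

section
/- Let q ∈ ℝ^m, N ∈ ℝ^{m×n}, M ∈ ℝ^{m×m}, x ∈ ℝ^n, y, w ∈ ℝ^m, σ ∈ ℝ, and set r⁰ := q + Nx + My − w and μ := (yᵀw)/m. Suppose the direction (dx,dy,dw) satisfies N dx + M dy − dw = −r⁰ and w_j dy_j + y_j dw_j = −w_j y_j + σ μ for every j = 1,…,m. Then for every t ∈ [0,1], the infeasibility measure φ(x,y,w) := yᵀw + ‖q + Nx + My − w‖ evaluated along the arc satisfies φ(x + t·dx, y + t·dy, w + t·dw) = (1 − t + σ t)·yᵀw + t²·(dy)ᵀ(dw) + (1 − t)·‖r⁰‖.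 -/
open Matrix

/-- The Euclidean norm of a vector in `ℝ^m`. -/
noncomputable def euclNorm {m : ℕ} (v : Fin m → ℝ) : ℝ :=
  Real.sqrt (∑ i, v i ^ 2)

lemma euclNorm_smul {m : ℕ} (c : ℝ) (hc : 0 ≤ c) (v : Fin m → ℝ) :
    euclNorm (fun i => c * v i) = c * euclNorm v := by
  unfold euclNorm
  have : ∑ i, (c * v i) ^ 2 = c ^ 2 * ∑ i, v i ^ 2 := by
    rw [Finset.mul_sum]; congr 1; ext i; ring
  rw [this, Real.sqrt_mul (by positivity), Real.sqrt_sq hc]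

/-- For the LCP-constrained program with residual
`r⁰ = q + Nx + My - w` and `μ = (yᵀw)/m`, if the direction `(dx,dy,dw)` satisfies the
affine feasibility equation `N dx + M dy - dw = -r⁰` and the perturbed complementarity
equations `w_j dy_j + y_j dw_j = -w_j y_j + σ μ` for all `j`, then for every `t ∈ [0,1]`
the infeasibility measure `φ(x,y,w) = yᵀw + ‖q + Nx + My - w‖` satisfies
`φ(arc(t)) = (1 - t + σ t) yᵀw + t² dyᵀdw + (1 - t)‖r⁰‖`. -/
theorem infeasibility_along_arc
    (n m : ℕ) (q : Fin m → ℝ)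
    (N : Matrix (Fin m) (Fin n) ℝ) (M : Matrix (Fin m) (Fin m) ℝ)
    (x dx : Fin n → ℝ) (y w dy dw : Fin m → ℝ) (σ : ℝ)
    (hAff : N.mulVec dx + M.mulVec dy - dw = -(q + N.mulVec x + M.mulVec y - w))
    (hPert : ∀ j : Fin m, w j * dy j + y j * dw j
      = -(w j * y j) + σ * ((∑ i, y i * w i) / m)) :
    ∀ t ∈ Set.Icc (0 : ℝ) 1,
      (∑ i, (y i + t * dy i) * (w i + t * dw i))
        + euclNorm (q + N.mulVec (x + t • dx) + M.mulVec (y + t • dy) - (w + t • dw))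
      = (1 - t + σ * t) * (∑ i, y i * w i) + t ^ 2 * (∑ i, dy i * dw i)
        + (1 - t) * euclNorm (q + N.mulVec x + M.mulVec y - w) := by
  intro t ht
  obtain ⟨ht0, ht1⟩ := ht
  set S := ∑ i, y i * w i with hS
  -- sum part
  have hsum : (∑ i, (y i + t * dy i) * (w i + t * dw i))
      = (1 - t + σ * t) * S + t ^ 2 * (∑ i, dy i * dw i) := by
    have hexp : ∀ i : Fin m, (y i + t * dy i) * (w i + t * dw i)
        = y i * w i + t * (w i * dy i + y i * dw i) + t ^ 2 * (dy i * dw i) := by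
      intro i; ring
    rw [Finset.sum_congr rfl (fun i _ => hexp i)]
    rw [Finset.sum_add_distrib, Finset.sum_add_distrib, ← Finset.mul_sum, ← Finset.mul_sum]
    have hmid : (∑ i, (w i * dy i + y i * dw i)) = -S + σ * S := by
      have h1 : ∑ i, -(w i * y i) = -S := by
        rw [hS, ← Finset.sum_neg_distrib]
        congr 1; ext i; ring
      rw [Finset.sum_congr rfl (fun i _ => hPert i), Finset.sum_add_distrib, h1,
        Finset.sum_const, Finset.card_univ, Fintype.card_fin, nsmul_eq_mul]
      rcases Nat.eq_zero_or_pos m with hm | hm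
      · subst hm
        have : S = 0 := by simp [hS]
        simp [this]
      · have hmne : (m : ℝ) ≠ 0 := Nat.cast_ne_zero.2 hm.ne'
        field_simp
    rw [hmid]; ring
  -- residual part
  have hres : (q + N.mulVec (x + t • dx) + M.mulVec (y + t • dy) - (w + t • dw))
      = fun i => (1 - t) * (q + N.mulVec x + M.mulVec y - w) i := by
    funext i
    have h1 : N.mulVec (x + t • dx) = N.mulVec x + t • N.mulVec dx := by
      rw [mulVec_add, mulVec_smul]
    have h2 : M.mulVec (y + t • dy) = M.mulVec y + t • M.mulVec dy := by
      rw [mulVec_add, mulVec_smul]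
    have hA := congrFun hAff i
    simp only [h1, h2, Pi.add_apply, Pi.sub_apply, Pi.smul_apply, Pi.neg_apply,
      smul_eq_mul] at hA ⊢
    nlinarith [hA]
  rw [hsum, hres, euclNorm_smul (1 - t) (by linarith) _]
end

section
/- Let m ≥ 1, let y, w ∈ ℝ^m with y_i > 0 and w_i > 0 for all i, let p ∈ (0,1) and σ ∈ (0,1), set μ := (yᵀw)/m, and assume the centrality condition y_i w_i ≥ p μ holds for every i. Let dy, dw ∈ ℝ^m satisfy the perturbed complementarity equations w_j dy_j + y_j dw_j = −w_j y_j + σ μ for every j. Then there exists t̄ ∈ (0,1] such that for every t ∈ [0, t̄] and every index i, (y_i + t·dy_i)(w_i + t·dw_i) ≥ p · ((y + t·dy)ᵀ(w + t·dw))/m; that is, centrality is preserved along the trial arc for all sufficiently small step lengths. -/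
/-- Let `y, w > 0` componentwise, `p, σ ∈ (0,1)`, `μ = (yᵀw)/m`, and
assume the centrality condition `y_i w_i ≥ p μ` for all `i` and the perturbed
complementarity equations `w_j dy_j + y_j dw_j = -w_j y_j + σ μ` for all `j`. Then
there is a `t̄ ∈ (0,1]` such that centrality is preserved along the trial arc:
for all `t ∈ [0, t̄]` and all `i`,
`(y_i + t dy_i)(w_i + t dw_i) ≥ p ((y + t dy)ᵀ(w + t dw))/m`. -/
theorem centrality_preserved_along_arc
    (m : ℕ) (hm : 1 ≤ m) (y w dy dw : Fin m → ℝ)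
    (hy : ∀ i, 0 < y i) (hw : ∀ i, 0 < w i)
    (p σ : ℝ) (hp : p ∈ Set.Ioo (0 : ℝ) 1) (hσ : σ ∈ Set.Ioo (0 : ℝ) 1)
    (hCent : ∀ i, p * ((∑ j, y j * w j) / m) ≤ y i * w i)
    (hPert : ∀ j : Fin m, w j * dy j + y j * dw j
      = -(w j * y j) + σ * ((∑ i, y i * w i) / m)) :
    ∃ tbar ∈ Set.Ioc (0 : ℝ) 1, ∀ t ∈ Set.Icc (0 : ℝ) tbar, ∀ i : Fin m,
      p * ((∑ j, (y j + t * dy j) * (w j + t * dw j)) / m)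
        ≤ (y i + t * dy i) * (w i + t * dw i) := by
  obtain ⟨hp0, hp1⟩ := hp
  obtain ⟨hσ0, hσ1⟩ := hσ
  have hm' : (0:ℝ) < m := by exact_mod_cast hm
  set S : ℝ := ∑ j, y j * w j with hSdef
  have hne : (Finset.univ : Finset (Fin m)).Nonempty := by
    rw [Finset.univ_nonempty_iff]
    exact Fin.pos_iff_nonempty.mp (by omega)
  have hS : 0 < S :=
    Finset.sum_pos (fun i _ => mul_pos (hy i) (hw i)) hne
  set μ : ℝ := S / m with hμdef
  have hμ : 0 < μ := div_pos hS hm'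
  set D : ℝ := ∑ j, dy j * dw j with hDdef
  set A : ℝ := ∑ j, |dy j * dw j| with hAdef
  have hA0 : 0 ≤ A := hAdef ▸ Finset.sum_nonneg fun j _ => abs_nonneg _
  set C : ℝ := A + |D| / m with hCdef
  have hDm : 0 ≤ |D| / m := div_nonneg (abs_nonneg _) hm'.le
  have hC0 : 0 ≤ C := by rw [hCdef]; linarith
  set ε : ℝ := σ * μ * (1 - p) with hεdef
  have hε : 0 < ε := by
    rw [hεdef]; apply mul_pos (mul_pos hσ0 hμ); linarith
  refine ⟨min 1 (ε / (C + 1)), ⟨lt_min one_pos (div_pos hε (by linarith)),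
    min_le_left _ _⟩, ?_⟩
  intro t ⟨ht0, ht1⟩ i
  have htle1 : t ≤ 1 := ht1.trans (min_le_left _ _)
  have htε : t * (C + 1) ≤ ε := by
    have h := ht1.trans (min_le_right _ _)
    rw [le_div_iff₀ (by linarith)] at h
    linarith
  -- expansion of each product along the arc
  have hfi : ∀ j, (y j + t * dy j) * (w j + t * dw j)
      = (1 - t) * (y j * w j) + t * (σ * μ) + t ^ 2 * (dy j * dw j) := by
    intro j
    linear_combination t * hPert j
  have hsum : ∑ j, (y j + t * dy j) * (w j + t * dw j)
      = (1 - t) * S + t * (σ * μ) * m + t ^ 2 * D := by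
    simp only [hfi, Finset.sum_add_distrib, ← Finset.mul_sum, Finset.sum_const,
      Finset.card_univ, Fintype.card_fin, nsmul_eq_mul, ← hSdef, ← hDdef]
    ring
  -- bound on the quadratic coefficient
  have habs : |dy i * dw i| ≤ A := by
    rw [hAdef]
    exact Finset.single_le_sum (f := fun j => |dy j * dw j|)
      (fun j _ => abs_nonneg _) (Finset.mem_univ i)
  have hXi : p * D / m - dy i * dw i ≤ C + 1 := by
    have h1 : p * D / m ≤ |D| / m := by
      apply div_le_div_of_nonneg_right ?_ hm'.le
      calc p * D ≤ p * |D| := mul_le_mul_of_nonneg_left (le_abs_self D) hp0.le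
        _ ≤ 1 * |D| := mul_le_mul_of_nonneg_right hp1.le (abs_nonneg _)
        _ = |D| := one_mul _
    have h2 : -(dy i * dw i) ≤ |dy i * dw i| := neg_le_abs _
    have h3 := hCdef
    linarith
  -- main estimate
  rw [hsum, hfi i]
  have hcent := hCent i
  have key1 : 0 ≤ (1 - t) * (y i * w i - p * μ) :=
    mul_nonneg (by linarith) (by linarith)
  have key2 : t ^ 2 * (p * D / m - dy i * dw i) ≤ t * ε := by
    have h1 : t * (p * D / m - dy i * dw i) ≤ t * (C + 1) :=
      mul_le_mul_of_nonneg_left hXi ht0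
    have h2 : t * (t * (p * D / m - dy i * dw i)) ≤ t * ε :=
      mul_le_mul_of_nonneg_left (h1.trans htε) ht0
    nlinarith
  have hgoal : p * (((1 - t) * S + t * (σ * μ) * m + t ^ 2 * D) / m)
      = (1 - t) * (p * μ) + t * (σ * μ) * p + t ^ 2 * (p * D / m) := by
    rw [hμdef]; field_simp
  rw [hgoal]
  have hεeq : t * ε = t * (σ * μ) - t * (σ * μ) * p := by rw [hεdef]; ring
  nlinarith [key1, key2]
end

section
/- Let X ⊆ ℝ^n be a convex set, let x ∈ X, let g ∈ ℝ^n, h ∈ ℝ^m, let Q ∈ ℝ^{n×n} be symmetric positive definite, and let D : ℝ^n → ℝ^m be positively homogeneous (D(τ·d) = τ·D(d) for all τ > 0 and D(0) = 0). Define the direction-finding subproblem objective Φ(dx) := gᵀdx + hᵀD(dx) + ½ dxᵀ Q dx. If Φ(dx) ≥ 0 for every dx ∈ ℝ^n with x + dx ∈ X (i.e. the optimal value of the subproblem is zero), then Φ(dx) > 0 for every dx ≠ 0 with x + dx ∈ X; consequently dx = 0 is the unique globally optimal solution of the subproblem. -/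
open Matrix Filter Set Topology

theorem nonneg_of_forall_mem_Ioc_add_mul_nonneg {a b : ℝ}
    (h : ∀ τ ∈ Ioc (0 : ℝ) 1, 0 ≤ a + τ * b) : 0 ≤ a := by
  have hlim : Tendsto (fun τ : ℝ => a + τ * b) (𝓝[>] 0) (𝓝 a) := by
    have : Continuous fun τ : ℝ => a + τ * b := by fun_prop
    simpa using (this.tendsto 0).mono_left nhdsWithin_le_nhds
  refine ge_of_tendsto hlim ?_
  filter_upwards [Ioc_mem_nhdsGT one_pos] with τ hτ using h τ hτ

/-- Along `τ • d` the sum is `τ * (ℓ d + τ * q d)`, and `τ → 0⁺` kills the quadratic term. -/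
theorem StarConvex.nonneg_of_add_nonneg_of_homogeneous {E : Type*} [AddCommGroup E]
    [Module ℝ E] {S : Set E} (hS : StarConvex ℝ 0 S) {ℓ q : E → ℝ}
    (hℓ : ∀ τ : ℝ, 0 < τ → ∀ d, ℓ (τ • d) = τ * ℓ d)
    (hq : ∀ τ : ℝ, 0 < τ → ∀ d, q (τ • d) = τ ^ 2 * q d)
    (hnonneg : ∀ d ∈ S, 0 ≤ ℓ d + q d) {d : E} (hd : d ∈ S) : 0 ≤ ℓ d := by
  refine nonneg_of_forall_mem_Ioc_add_mul_nonneg (b := q d) fun τ ⟨hτ₀, hτ₁⟩ => ?_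
  have hscaled := hnonneg (τ • d) (hS.smul_mem hd hτ₀.le hτ₁)
  rw [hℓ τ hτ₀, hq τ hτ₀, show τ * ℓ d + τ ^ 2 * q d = τ * (ℓ d + τ * q d) by ring] at hscaled
  exact nonneg_of_mul_nonneg_right hscaled hτ₀

theorem subproblem_zero_value_unique_optimum_general
    (n m : ℕ) (X : Set (Fin n → ℝ)) (hX : Convex ℝ X)
    (x : Fin n → ℝ) (hx : x ∈ X)
    (g : Fin n → ℝ) (h : Fin m → ℝ)
    (Q : Matrix (Fin n) (Fin n) ℝ) (hQ : Q.PosDef)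
    (D : (Fin n → ℝ) → (Fin m → ℝ))
    (hD : ∀ τ : ℝ, 0 < τ → ∀ v : Fin n → ℝ, D (τ • v) = τ • D v)
    (hopt : ∀ dx : Fin n → ℝ, x + dx ∈ X →
      0 ≤ g ⬝ᵥ dx + h ⬝ᵥ D dx + (1 / 2) * (dx ⬝ᵥ Q.mulVec dx)) :
    ∀ dx : Fin n → ℝ, dx ≠ 0 → x + dx ∈ X →
      0 < g ⬝ᵥ dx + h ⬝ᵥ D dx + (1 / 2) * (dx ⬝ᵥ Q.mulVec dx) := by
  intro dx hdx hfeas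
  have hfeasible : StarConvex ℝ 0 {d | x + d ∈ X} :=
    (hX.translate_preimage_right x).starConvex (by simpa using hx)
  have hlinear : 0 ≤ g ⬝ᵥ dx + h ⬝ᵥ D dx :=
    hfeasible.nonneg_of_add_nonneg_of_homogeneous
      (q := fun d => (1 / 2) * (d ⬝ᵥ Q.mulVec d))
      (fun τ hτ d => by simp only [hD τ hτ, dotProduct_smul, smul_eq_mul]; ring)
      (fun τ _ d => by simp only [mulVec_smul, dotProduct_smul, smul_dotProduct, smul_eq_mul]; ring)
      hopt hfeas
  have hquadratic : 0 < dx ⬝ᵥ Q.mulVec dx := by simpa using hQ.dotProduct_mulVec_pos hdx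
  linarith

/-- Let `X ⊆ ℝⁿ` be convex, `x ∈ X`, `Q` symmetric positive definite,
and `D` positively homogeneous with `D 0 = 0`. If the direction-finding objective
`Φ(dx) = gᵀdx + hᵀD(dx) + ½ dxᵀQdx` is nonnegative over the feasible set
`{dx : x + dx ∈ X}` (i.e. the optimal value of the subproblem is zero), then
`Φ(dx) > 0` for every feasible `dx ≠ 0`; hence `dx = 0` is the unique global optimum. -/
theorem subproblem_zero_value_unique_optimum
    (n m : ℕ) (X : Set (Fin n → ℝ)) (hX : Convex ℝ X)
    (x : Fin n → ℝ) (hx : x ∈ X)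
    (g : Fin n → ℝ) (h : Fin m → ℝ)
    (Q : Matrix (Fin n) (Fin n) ℝ) (hQ : Q.PosDef)
    (D : (Fin n → ℝ) → (Fin m → ℝ))
    (hD : ∀ τ : ℝ, 0 < τ → ∀ v : Fin n → ℝ, D (τ • v) = τ • D v)
    (hD0 : D 0 = 0)
    (hopt : ∀ dx : Fin n → ℝ, x + dx ∈ X →
      0 ≤ g ⬝ᵥ dx + h ⬝ᵥ D dx + (1 / 2) * (dx ⬝ᵥ Q.mulVec dx)) :
    ∀ dx : Fin n → ℝ, dx ≠ 0 → x + dx ∈ X →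
      0 < g ⬝ᵥ dx + h ⬝ᵥ D dx + (1 / 2) * (dx ⬝ᵥ Q.mulVec dx) :=
  subproblem_zero_value_unique_optimum_general n m X hX x hx g h Q hQ D hD hopt
end
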